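/- Let n ≥ 2, η₁, η₂ ∈ ℝ, let W : ℝ → ℝ be C¹ with W(0) = 0 and W'(0) = 0, let R₀ > 0, and let U : [0, ∞) → ℝ be C² with U'(0) = 0 and U(R) = 0 for all R ≥ R₀, satisfying the codimension-n profile equation U''(R) + ((n−1)/R)·U'(R) = W'(U(R)) for all R > 0, and such that x ↦ U(‖x‖) is C² on ℝⁿ. Let ε_j → 0⁺, let N_j ∈ ℕ, let α ≥ 0 with N_j·ε_j^{n−1} → α, and for each j let x_{j,1}, …, x_{j,N_j} ∈ ℝⁿ be points with ‖x_{j,k} − x_{j,k'}‖ > 2·ε_j·R₀ for all k ≠ k'. Define w_j : ℝⁿ → ℝ by w_j(x) := Σ_{k=1}^{N_j} U(‖x − x_{j,k}‖/ε_j). Then F_{ε_j}|_{ℝⁿ}(w_j) → −α·n·ω_n·( η₁/2 + ((2−n)/(2n))·η₂ )·σ_n as j → ∞, where ω_n is the Lebesgue measure of the unit ball in ℝⁿ and σ_n := ∫_0^∞ U'(R)²·R^{n−1} dR. -/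

import Mathlib

open MeasureTheory Filter

noncomputable def pd {n : ℕ} (i : Fin n) (u : EuclideanSpace ℝ (Fin n) → ℝ)
    (x : EuclideanSpace ℝ (Fin n)) : ℝ :=
  fderiv ℝ u x (EuclideanSpace.single i 1)

noncomputable def lap {n : ℕ} (u : EuclideanSpace ℝ (Fin n) → ℝ)
    (x : EuclideanSpace ℝ (Fin n)) : ℝ :=
  ∑ i, pd i (fun y => pd i u y) x

noncomputable def gradSq {n : ℕ} (u : EuclideanSpace ℝ (Fin n) → ℝ)
    (x : EuclideanSpace ℝ (Fin n)) : ℝ :=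
  ∑ i, (pd i u x) ^ 2

noncomputable def FCH {n : ℕ} (ε η₁ η₂ : ℝ) (W : ℝ → ℝ)
    (D : Set (EuclideanSpace ℝ (Fin n))) (u : EuclideanSpace ℝ (Fin n) → ℝ) : ℝ :=
  ∫ x in D, ((1 / (2 * ε)) * (-(ε * lap u x) + ε⁻¹ * deriv W (u x)) ^ 2
    - ((η₁ * ε / 2) * gradSq u x + (η₂ / ε) * W (u x)))

/-!
Because distinct micelles have disjoint supports and `W(0) = W'(0) = 0`, the energy density of
`w_j` is the sum of the densities of its micelles. The profile `V(x) = U(‖x‖)` solves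
`ΔV = W'(V)`, so the residual `−εΔv + ε⁻¹W'(v)` of each rescaled micelle
`v = V(ε⁻¹(· − x_{j,k}))` vanishes, and the change of variables `y = ε⁻¹(x − x_{j,k})` shows
that each micelle contributes exactly `ε^{n−1} F_1(V)`. In polar coordinates
`F_1(V) = −n ω_n ((η₁/2) σ_n + η₂ ∫ r^{n−1} W(U))`, and the Pohozaev identity, obtained by
integrating `(r^n (W(U) − U'²/2))' = n r^{n−1} W(U) + ((n−2)/2) r^{n−1} U'²` over `[0, R₀]`,
turns the last integral into `((2−n)/(2n)) σ_n`. Hence `F_{ε_j}(w_j) = N_j ε_j^{n−1} F_1(V)`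
exactly, and the limit follows from `N_j ε_j^{n−1} → α`.
-/

open Set Metric Topology Function

section Differential

variable {n : ℕ}

local notation "E" => EuclideanSpace ℝ (Fin n)

theorem pd_congr_of_eventuallyEq {u v : E → ℝ} {z : E} (h : u =ᶠ[𝓝 z] v) (i : Fin n) :
    pd i u z = pd i v z := by
  rw [pd, pd, h.fderiv_eq]

theorem lap_congr_of_eventuallyEq {u v : E → ℝ} {z : E} (h : u =ᶠ[𝓝 z] v) :
    lap u z = lap v z :=
  Finset.sum_congr rfl fun i _ => pd_congr_of_eventuallyEq
    (h.eventuallyEq_nhds.mono fun _ hy => pd_congr_of_eventuallyEq hy i) i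

theorem gradSq_congr_of_eventuallyEq {u v : E → ℝ} {z : E} (h : u =ᶠ[𝓝 z] v) :
    gradSq u z = gradSq v z := by
  simp only [gradSq, pd_congr_of_eventuallyEq h]

theorem contDiff_pd {m : ℕ} {u : E → ℝ} (i : Fin n) (h : ContDiff ℝ (m + 1) u) :
    ContDiff ℝ m (pd i u) :=
  (ContinuousLinearMap.apply ℝ ℝ (EuclideanSpace.single i 1) :
    (E →L[ℝ] ℝ) →L[ℝ] ℝ).contDiff.comp (h.fderiv_right le_rfl)

theorem continuous_lap {u : E → ℝ} (hu : ContDiff ℝ 2 u) : Continuous (lap u) :=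
  continuous_finsetSum _ fun i _ =>
    (contDiff_pd (m := 0) i (contDiff_pd (m := 1) i hu)).continuous

theorem continuous_gradSq {u : E → ℝ} (hu : ContDiff ℝ 2 u) : Continuous (gradSq u) :=
  continuous_finsetSum _ fun i _ => ((contDiff_pd (m := 1) i hu).continuous).pow 2

end Differential

section Density

variable {n : ℕ} {ε η₁ η₂ : ℝ} {W : ℝ → ℝ}

local notation "E" => EuclideanSpace ℝ (Fin n)

noncomputable def fchDensity (ε η₁ η₂ : ℝ) (W : ℝ → ℝ) (u : E → ℝ) (x : E) : ℝ :=
  (1 / (2 * ε)) * (-(ε * lap u x) + ε⁻¹ * deriv W (u x)) ^ 2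
    - ((η₁ * ε / 2) * gradSq u x + (η₂ / ε) * W (u x))

theorem FCH_eq_integral_fchDensity (D : Set E) (u : E → ℝ) :
    FCH ε η₁ η₂ W D u = ∫ x in D, fchDensity ε η₁ η₂ W u x :=
  rfl

theorem fchDensity_congr_of_eventuallyEq {u v : E → ℝ} {z : E} (h : u =ᶠ[𝓝 z] v) :
    fchDensity ε η₁ η₂ W u z = fchDensity ε η₁ η₂ W v z := by
  simp only [fchDensity, lap_congr_of_eventuallyEq h, gradSq_congr_of_eventuallyEq h,
    h.eq_of_nhds]

theorem fchDensity_eq_zero_of_notMem_tsupport (hW0 : W 0 = 0) (hW'0 : deriv W 0 = 0)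
    {u : E → ℝ} {z : E} (hz : z ∉ tsupport u) : fchDensity ε η₁ η₂ W u z = 0 := by
  rw [fchDensity_congr_of_eventuallyEq (notMem_tsupport_iff_eventuallyEq.1 hz)]
  simp [fchDensity, lap, gradSq, pd, hW0, hW'0]

theorem fchDensity_sum_of_pairwise_disjoint {ι : Type*} [Fintype ι] {g : ι → E → ℝ}
    (hg : Pairwise (Disjoint on fun k => tsupport (g k)))
    (hW0 : W 0 = 0) (hW'0 : deriv W 0 = 0) (z : E) :
    fchDensity ε η₁ η₂ W (fun y => ∑ k, g k y) z = ∑ k, fchDensity ε η₁ η₂ W (g k) z := by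
  by_cases hz : ∃ k, z ∈ tsupport (g k)
  · obtain ⟨k₀, hk₀⟩ := hz
    have hout : ∀ k ≠ k₀, z ∉ tsupport (g k) := fun k hk hzk =>
      (hg hk).ne_of_mem hzk hk₀ rfl
    have hloc : (fun y => ∑ k, g k y) =ᶠ[𝓝 z] g k₀ := by
      have hvan : ∀ᶠ y in 𝓝 z, ∀ k, k ≠ k₀ → g k y = 0 := eventually_all.2 fun k => by
        by_cases hk : k = k₀
        · exact Eventually.of_forall fun _ h => (h hk).elim
        · exact (notMem_tsupport_iff_eventuallyEq.1 (hout k hk)).mono fun _ hy _ => hy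
      filter_upwards [hvan] with y hy
      exact Finset.sum_eq_single k₀ (fun k _ hk => hy k hk) (by simp)
    rw [fchDensity_congr_of_eventuallyEq hloc, Finset.sum_eq_single k₀
      (fun k _ hk => fchDensity_eq_zero_of_notMem_tsupport hW0 hW'0 (hout k hk)) (by simp)]
  · rw [not_exists] at hz
    have hloc : (fun y => ∑ k, g k y) =ᶠ[𝓝 z] fun _ => 0 := by
      filter_upwards [eventually_all.2 fun k => notMem_tsupport_iff_eventuallyEq.1 (hz k)]
        with y hy
      exact Finset.sum_eq_zero fun k _ => hy k
    rw [fchDensity_congr_of_eventuallyEq hloc, Finset.sum_eq_zero fun k _ =>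
      fchDensity_eq_zero_of_notMem_tsupport hW0 hW'0 (hz k)]
    exact fchDensity_eq_zero_of_notMem_tsupport hW0 hW'0 (by simp)

theorem integrable_fchDensity {u : E → ℝ} (hu : ContDiff ℝ 2 u) (hcs : HasCompactSupport u)
    (hW : ContDiff ℝ 1 W) (hW0 : W 0 = 0) (hW'0 : deriv W 0 = 0) :
    Integrable (fchDensity ε η₁ η₂ W u) := by
  have hcont : Continuous (fchDensity ε η₁ η₂ W u) := by
    have hW' : Continuous (deriv W) := hW.continuous_deriv le_rfl
    have hlap := continuous_lap hu
    have hgrad := continuous_gradSq hu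
    have hu0 := hu.continuous
    have hWc := hW.continuous
    unfold fchDensity
    fun_prop
  refine hcont.integrable_of_hasCompactSupport (hcs.mono' fun z hz => ?_)
  by_contra h
  exact hz (fchDensity_eq_zero_of_notMem_tsupport hW0 hW'0 h)

end Density

section Superposition

variable {n : ℕ} {ε η₁ η₂ : ℝ} {W : ℝ → ℝ}

local notation "E" => EuclideanSpace ℝ (Fin n)

theorem FCH_sum_of_pairwise_disjoint {ι : Type*} [Fintype ι] {g : ι → E → ℝ}
    (hg2 : ∀ k, ContDiff ℝ 2 (g k)) (hgc : ∀ k, HasCompactSupport (g k))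
    (hg : Pairwise (Disjoint on fun k => tsupport (g k)))
    (hW : ContDiff ℝ 1 W) (hW0 : W 0 = 0) (hW'0 : deriv W 0 = 0) (D : Set E) :
    FCH ε η₁ η₂ W D (fun y => ∑ k, g k y) = ∑ k, FCH ε η₁ η₂ W D (g k) := by
  simp only [FCH_eq_integral_fchDensity, fchDensity_sum_of_pairwise_disjoint hg hW0 hW'0]
  exact integral_finsetSum _ fun k _ =>
    (integrable_fchDensity (hg2 k) (hgc k) hW hW0 hW'0).integrableOn

theorem pd_const_mul {a : ℝ} {u : E → ℝ} {x : E} (hu : DifferentiableAt ℝ u x) (i : Fin n) :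
    pd i (fun z => a * u z) x = a * pd i u x := by
  simp [pd, fderiv_const_mul hu]

theorem pd_comp_rescale {u : E → ℝ} (hu : Differentiable ℝ u) (ε : ℝ) (c : E) (i : Fin n)
    (x : E) : pd i (fun z => u (ε⁻¹ • (z - c))) x = ε⁻¹ * pd i u (ε⁻¹ • (x - c)) := by
  have hA : HasFDerivAt (fun z : E => ε⁻¹ • (z - c)) (ε⁻¹ • ContinuousLinearMap.id ℝ E) x :=
    ((hasFDerivAt_id x).sub_const c).const_smul ε⁻¹
  have h := ((hu _).hasFDerivAt.comp x hA).fderiv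
  rw [Function.comp_def] at h
  simp [pd, h]

theorem gradSq_comp_rescale {u : E → ℝ} (hu : Differentiable ℝ u) (ε : ℝ) (c : E) (x : E) :
    gradSq (fun z => u (ε⁻¹ • (z - c))) x = ε⁻¹ ^ 2 * gradSq u (ε⁻¹ • (x - c)) := by
  simp only [gradSq, pd_comp_rescale hu, mul_pow, Finset.mul_sum]

theorem lap_comp_rescale {u : E → ℝ} (hu : ContDiff ℝ 2 u) (ε : ℝ) (c : E) (x : E) :
    lap (fun z => u (ε⁻¹ • (z - c))) x = ε⁻¹ ^ 2 * lap u (ε⁻¹ • (x - c)) := by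
  simp only [lap, Finset.mul_sum, pd_comp_rescale (hu.differentiable two_ne_zero)]
  refine Finset.sum_congr rfl fun i _ => ?_
  have hpd : Differentiable ℝ (pd i u) :=
    (contDiff_pd (m := 1) i hu).differentiable one_ne_zero
  have hd : DifferentiableAt ℝ (fun y => pd i u (ε⁻¹ • (y - c))) x := by fun_prop
  rw [pd_const_mul hd, pd_comp_rescale hpd, sq, mul_assoc]

theorem fchDensity_comp_rescale {u : E → ℝ} (hu : ContDiff ℝ 2 u)
    (hΔ : ∀ y, lap u y = deriv W (u y)) (hε : ε ≠ 0) (c : E) (x : E) :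
    fchDensity ε η₁ η₂ W (fun z => u (ε⁻¹ • (z - c))) x
      = ε⁻¹ * fchDensity 1 η₁ η₂ W u (ε⁻¹ • (x - c)) := by
  simp only [fchDensity, lap_comp_rescale hu, gradSq_comp_rescale (hu.differentiable two_ne_zero),
    hΔ]
  field_simp
  ring

theorem FCH_comp_rescale (hn : n ≠ 0) {u : E → ℝ} (hu : ContDiff ℝ 2 u)
    (hΔ : ∀ y, lap u y = deriv W (u y)) (hε : 0 < ε) (c : E) :
    FCH ε η₁ η₂ W univ (fun z => u (ε⁻¹ • (z - c))) = ε ^ (n - 1) * FCH 1 η₁ η₂ W univ u := by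
  simp only [FCH_eq_integral_fchDensity, Measure.restrict_univ,
    fchDensity_comp_rescale hu hΔ hε.ne']
  rw [integral_const_mul, integral_sub_right_eq_self (fun z => fchDensity 1 η₁ η₂ W u (ε⁻¹ • z)),
    Measure.integral_comp_inv_smul_of_nonneg _ _ hε.le, finrank_euclideanSpace_fin, smul_eq_mul,
    ← pow_sub_one_mul hn]
  field_simp

theorem tsupport_comp_rescale_subset {V : E → ℝ} {R : ℝ} (hV : support V ⊆ closedBall 0 R)
    (hε : 0 < ε) (c : E) : tsupport (fun z => V (ε⁻¹ • (z - c))) ⊆ closedBall c (ε * R) := by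
  refine closure_minimal (fun z hz => ?_) isClosed_closedBall
  have := hV hz
  rw [mem_closedBall_zero_iff, norm_smul, norm_inv, Real.norm_of_nonneg hε.le,
    inv_mul_le_iff₀ hε] at this
  rwa [mem_closedBall, dist_eq_norm]

theorem FCH_sum_comp_rescale {ι : Type*} [Fintype ι] (hn : n ≠ 0) {V : E → ℝ} {R : ℝ}
    (hV : ContDiff ℝ 2 V) (hΔ : ∀ y, lap V y = deriv W (V y))
    (hVsupp : support V ⊆ closedBall 0 R) (hε : 0 < ε) {c : ι → E}
    (hc : Pairwise fun k k' => 2 * ε * R < ‖c k - c k'‖)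
    (hW : ContDiff ℝ 1 W) (hW0 : W 0 = 0) (hW'0 : deriv W 0 = 0) :
    FCH ε η₁ η₂ W univ (fun y => ∑ k, V (ε⁻¹ • (y - c k)))
      = Fintype.card ι * ε ^ (n - 1) * FCH 1 η₁ η₂ W univ V := by
  have hsupp := fun k => tsupport_comp_rescale_subset hVsupp hε (c k)
  rw [FCH_sum_of_pairwise_disjoint (g := fun k z => V (ε⁻¹ • (z - c k)))
    (fun k => hV.comp ((contDiff_id.sub contDiff_const).const_smul ε⁻¹))
    (fun k => (isCompact_closedBall _ _).of_isClosed_subset (isClosed_tsupport _) (hsupp k))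
    (fun k k' hkk' => Disjoint.mono (hsupp k) (hsupp k')
      (closedBall_disjoint_closedBall (by rw [dist_eq_norm]; linarith [hc hkk'])))
    hW hW0 hW'0]
  simp only [FCH_comp_rescale hn hV hΔ hε, Finset.sum_const, Finset.card_univ, nsmul_eq_mul,
    mul_assoc]

end Superposition

section Radial

theorem hasFDerivAt_norm_of_ne_zero {F : Type*} [NormedAddCommGroup F] [InnerProductSpace ℝ F]
    {y : F} (hy : y ≠ 0) : HasFDerivAt (fun x : F => ‖x‖) (‖y‖⁻¹ • innerSL ℝ y) y := by
  have h := (hasStrictFDerivAt_norm_sq y).hasFDerivAt.sqrt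
    (pow_ne_zero 2 (norm_ne_zero_iff.2 hy))
  simp only [Real.sqrt_sq (norm_nonneg _)] at h
  convert h using 1
  have : ‖y‖ ≠ 0 := norm_ne_zero_iff.2 hy
  ext v
  simp only [FunLike.coe_smul, Pi.smul_apply, smul_eq_mul]
  field_simp
  ring

theorem HasDerivAt.hasFDerivAt_comp_norm {F : Type*} [NormedAddCommGroup F]
    [InnerProductSpace ℝ F] {f : ℝ → ℝ} {f' : ℝ} {y : F} (hf : HasDerivAt f f' ‖y‖)
    (hy : y ≠ 0) : HasFDerivAt (fun x : F => f ‖x‖) (f' • ‖y‖⁻¹ • innerSL ℝ y) y :=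
  hf.comp_hasFDerivAt y (hasFDerivAt_norm_of_ne_zero hy)

variable {n : ℕ}

local notation "E" => EuclideanSpace ℝ (Fin n)

theorem pd_comp_norm {f : ℝ → ℝ} {f' : ℝ} {y : E} (hy : y ≠ 0) (hf : HasDerivAt f f' ‖y‖)
    (i : Fin n) : pd i (fun x : E => f ‖x‖) y = f' * ‖y‖⁻¹ * y i := by
  rw [pd, (hf.hasFDerivAt_comp_norm hy).fderiv]
  simp [EuclideanSpace.inner_single_right, mul_assoc]

theorem gradSq_comp_norm {f : ℝ → ℝ} {f' : ℝ} {y : E} (hy : y ≠ 0) (hf : HasDerivAt f f' ‖y‖) :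
    gradSq (fun x : E => f ‖x‖) y = f' ^ 2 := by
  have : ‖y‖ ≠ 0 := norm_ne_zero_iff.2 hy
  simp only [gradSq, pd_comp_norm hy hf, mul_pow, ← Finset.mul_sum,
    ← EuclideanSpace.real_norm_sq_eq]
  field_simp

theorem pd_pd_comp_norm {f : ℝ → ℝ} {f'' : ℝ} (hf : DifferentiableOn ℝ f (Ioi 0)) {y : E}
    (hy : y ≠ 0) (hf' : HasDerivAt (deriv f) f'' ‖y‖) (i : Fin n) :
    pd i (fun x => pd i (fun z : E => f ‖z‖) x) y
      = deriv f ‖y‖ * ‖y‖⁻¹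
        + (f'' * ‖y‖⁻¹ - deriv f ‖y‖ * (‖y‖ ^ 2)⁻¹) * ‖y‖⁻¹ * y i ^ 2 := by
  have hr : ‖y‖ ≠ 0 := norm_ne_zero_iff.2 hy
  have hq : HasDerivAt (fun s => deriv f s * s⁻¹)
      (f'' * ‖y‖⁻¹ - deriv f ‖y‖ * (‖y‖ ^ 2)⁻¹) ‖y‖ :=
    (hf'.mul (hasDerivAt_inv hr)).congr_deriv (by ring)
  have hprod := (hq.hasFDerivAt_comp_norm hy).mul (EuclideanSpace.proj i (𝕜 := ℝ)).hasFDerivAt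
  have hloc : (fun x => pd i (fun z : E => f ‖z‖) x)
      =ᶠ[𝓝 y] fun x : E => deriv f ‖x‖ * ‖x‖⁻¹ * x i := by
    filter_upwards [isOpen_compl_singleton.mem_nhds hy] with z hz
    have hz0 : 0 < ‖z‖ := norm_pos_iff.2 hz
    exact pd_comp_norm hz ((hf _ hz0).differentiableAt (Ioi_mem_nhds hz0)).hasDerivAt i
  rw [pd, hloc.fderiv_eq,
    HasFDerivAt.fderiv (f := fun x : E => deriv f ‖x‖ * ‖x‖⁻¹ * x i) hprod]
  simp [EuclideanSpace.inner_single_right]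
  ring

theorem lap_comp_norm {f : ℝ → ℝ} {f'' : ℝ} (hf : DifferentiableOn ℝ f (Ioi 0)) {y : E}
    (hy : y ≠ 0) (hf' : HasDerivAt (deriv f) f'' ‖y‖) :
    lap (fun x : E => f ‖x‖) y = f'' + ((n : ℝ) - 1) / ‖y‖ * deriv f ‖y‖ := by
  have hr : ‖y‖ ≠ 0 := norm_ne_zero_iff.2 hy
  rw [lap, Finset.sum_congr rfl fun i _ => pd_pd_comp_norm hf hy hf' i, Finset.sum_add_distrib,
    Finset.sum_const, ← Finset.mul_sum, ← EuclideanSpace.real_norm_sq_eq, Finset.card_univ,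
    Fintype.card_fin, nsmul_eq_mul]
  field_simp
  ring

end Radial

theorem setIntegral_Ioi_eq_intervalIntegral_of_eq_zero {f : ℝ → ℝ} {a b : ℝ} (hab : a ≤ b)
    (hf : ∀ r, b < r → f r = 0) : ∫ r in Ioi a, f r = ∫ r in a..b, f r := by
  rw [intervalIntegral.integral_of_le hab,
    setIntegral_eq_of_subset_of_forall_sdiff_eq_zero measurableSet_Ioi Ioc_subset_Ioi_self]
  rintro r ⟨hra, hrb⟩
  exact hf r (lt_of_not_ge fun h => hrb ⟨hra, h⟩)

structure IsMicelleProfile (n : ℕ) (W : ℝ → ℝ) (R₀ : ℝ) (U : ℝ → ℝ) : Prop where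
  pos : 0 < R₀
  contDiffOn : ContDiffOn ℝ 2 U (Ici 0)
  eq_zero_of_le : ∀ R, R₀ ≤ R → U R = 0
  ode : ∀ R, 0 < R → deriv (deriv U) R + ((n - 1 : ℝ) / R) * deriv U R = deriv W (U R)

namespace IsMicelleProfile

variable {n : ℕ} {W U : ℝ → ℝ} {R₀ : ℝ} (hP : IsMicelleProfile n W R₀ U)
include hP

theorem differentiableOn_Ioi : DifferentiableOn ℝ U (Ioi 0) :=
  (hP.contDiffOn.mono Ioi_subset_Ici_self).differentiableOn two_ne_zero

theorem hasDerivAt {s : ℝ} (hs : 0 < s) : HasDerivAt U (deriv U s) s :=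
  (hP.differentiableOn_Ioi s hs).differentiableAt (Ioi_mem_nhds hs) |>.hasDerivAt

theorem hasDerivAt_deriv {s : ℝ} (hs : 0 < s) : HasDerivAt (deriv U) (deriv (deriv U) s) s := by
  have h : ContDiffOn ℝ 1 (deriv U) (Ioi 0) :=
    (hP.contDiffOn.mono Ioi_subset_Ici_self).deriv_of_isOpen isOpen_Ioi (by norm_num)
  exact ((h.differentiableOn one_ne_zero s hs).differentiableAt (Ioi_mem_nhds hs)).hasDerivAt

theorem deriv_eq_zero_of_le {R : ℝ} (hR : R₀ ≤ R) : deriv U R = 0 := by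
  rw [← (hP.hasDerivAt (hP.pos.trans_le hR)).differentiableAt.derivWithin
    (uniqueDiffWithinAt_Ici R)]
  have hzero : EqOn U (fun _ => 0) (Ici R) := fun s hs => hP.eq_zero_of_le s (hR.trans hs)
  rw [derivWithin_congr hzero (hzero self_mem_Ici), derivWithin_fun_const, Pi.zero_apply]

theorem continuousOn_derivWithin : ContinuousOn (derivWithin U (Ici 0)) (Ici 0) :=
  hP.contDiffOn.continuousOn_derivWithin (uniqueDiffOn_Ici 0) (by norm_num)

theorem intervalIntegrable_pow_mul_deriv_sq (m : ℕ) :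
    IntervalIntegrable (fun r => r ^ m * deriv U r ^ 2) volume 0 R₀ := by
  have hc : ContinuousOn (fun r => r ^ m * derivWithin U (Ici 0) r ^ 2) (uIcc 0 R₀) :=
    ((continuous_pow m).continuousOn.mul (hP.continuousOn_derivWithin.pow 2)).mono
      (uIcc_of_le hP.pos.le ▸ Icc_subset_Ici_self)
  refine hc.intervalIntegrable.congr_uIoo fun r hr => ?_
  rw [uIoo_of_le hP.pos.le] at hr
  simp only [derivWithin_of_mem_nhds (Ici_mem_nhds hr.1)]

theorem intervalIntegrable_pow_mul_comp (hW : Continuous W) (m : ℕ) :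
    IntervalIntegrable (fun r => r ^ m * W (U r)) volume 0 R₀ :=
  ContinuousOn.intervalIntegrable <|
    ((continuous_pow m).continuousOn.mul (hW.comp_continuousOn hP.contDiffOn.continuousOn)).mono
      (uIcc_of_le hP.pos.le ▸ Icc_subset_Ici_self)

theorem pohozaev (hn : n ≠ 0) (hW : ContDiff ℝ 1 W) (hW0 : W 0 = 0) :
    ∫ r in 0..R₀, r ^ (n - 1) * W (U r)
      = (2 - n) / (2 * n) * ∫ r in 0..R₀, r ^ (n - 1) * deriv U r ^ 2 := by
  set g := derivWithin U (Ici 0)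
  have hg : ∀ r, 0 < r → g r = deriv U r := fun r hr =>
    derivWithin_of_mem_nhds (Ici_mem_nhds hr)
  set Φ : ℝ → ℝ := fun r => r ^ n * (W (U r) - g r ^ 2 / 2)
  have hΦc : ContinuousOn Φ (Icc 0 R₀) :=
    ((continuous_pow n).continuousOn.mul
      ((hW.continuous.comp_continuousOn hP.contDiffOn.continuousOn).sub
        ((hP.continuousOn_derivWithin.pow 2).div_const 2))).mono Icc_subset_Ici_self
  have hΦd : ∀ r ∈ Ioo 0 R₀, HasDerivAt Φ
      (n * (r ^ (n - 1) * W (U r)) + ((n : ℝ) - 2) / 2 * (r ^ (n - 1) * deriv U r ^ 2)) r := by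
    rintro r ⟨hr, -⟩
    have hWU : HasDerivAt (fun s => W (U s)) (deriv W (U r) * deriv U r) r :=
      (hW.differentiable one_ne_zero (U r)).hasDerivAt.comp r (hP.hasDerivAt hr)
    have hloc : Φ =ᶠ[𝓝 r] fun s => s ^ n * (W (U s) - deriv U s ^ 2 / 2) := by
      filter_upwards [Ioi_mem_nhds hr] with s hs
      simp only [Φ, hg s hs]
    refine (((hasDerivAt_pow n r).mul (hWU.sub (((hP.hasDerivAt_deriv hr).pow 2).div_const 2))
      ).congr_of_eventuallyEq hloc).congr_deriv ?_
    rw [← hP.ode r hr]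
    obtain ⟨m, rfl⟩ := Nat.exists_eq_succ_of_ne_zero hn
    simp only [Pi.sub_apply, Pi.pow_apply, Nat.succ_sub_one, pow_succ]
    field_simp
    push_cast
    ring
  have hA := hP.intervalIntegrable_pow_mul_deriv_sq (n - 1)
  have hB := hP.intervalIntegrable_pow_mul_comp hW.continuous (n - 1)
  have hFTC := intervalIntegral.integral_eq_sub_of_hasDeriv_right_of_le hP.pos.le hΦc
    (fun r hr => (hΦd r hr).hasDerivWithinAt) ((hB.const_mul _).add (hA.const_mul _))
  have hΦR : Φ R₀ = 0 := by
    simp [Φ, hP.eq_zero_of_le R₀ le_rfl, hW0, hg R₀ hP.pos, hP.deriv_eq_zero_of_le le_rfl]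
  have hΦ0 : Φ 0 = 0 := by simp [Φ, hn]
  rw [hΦR, hΦ0, sub_zero, intervalIntegral.integral_add (hB.const_mul _) (hA.const_mul _),
    intervalIntegral.integral_const_mul, intervalIntegral.integral_const_mul] at hFTC
  have hn' : (n : ℝ) ≠ 0 := Nat.cast_ne_zero.2 hn
  field_simp
  linarith

theorem lap_comp_norm_eq (hn : n ≠ 0)
    (hV : ContDiff ℝ 2 fun x : EuclideanSpace ℝ (Fin n) => U ‖x‖) (hW : ContDiff ℝ 1 W)
    (y : EuclideanSpace ℝ (Fin n)) : lap (fun x => U ‖x‖) y = deriv W (U ‖y‖) := by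
  have : NeZero n := ⟨hn⟩
  refine congrFun (Continuous.ext_on (dense_compl_singleton 0) (continuous_lap hV)
    ((hW.continuous_deriv le_rfl).comp hV.continuous) fun x hx => ?_) y
  have hx0 : 0 < ‖x‖ := norm_pos_iff.2 hx
  rw [lap_comp_norm hP.differentiableOn_Ioi hx (hP.hasDerivAt_deriv hx0)]
  exact hP.ode _ hx0

theorem support_comp_norm_subset :
    support (fun x : EuclideanSpace ℝ (Fin n) => U ‖x‖) ⊆ closedBall 0 R₀ := fun x hx => by
  rw [mem_closedBall_zero_iff]
  by_contra h
  exact hx (hP.eq_zero_of_le _ (not_le.1 h).le)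

theorem FCH_one_comp_norm (hn : n ≠ 0)
    (hV : ContDiff ℝ 2 fun x : EuclideanSpace ℝ (Fin n) => U ‖x‖) (hW : ContDiff ℝ 1 W)
    (hW0 : W 0 = 0) (η₁ η₂ : ℝ) :
    FCH 1 η₁ η₂ W univ (fun x : EuclideanSpace ℝ (Fin n) => U ‖x‖)
      = -(n * (volume (ball (0 : EuclideanSpace ℝ (Fin n)) 1)).toReal
        * (η₁ / 2 + (2 - n) / (2 * n) * η₂) * ∫ r in Ioi 0, deriv U r ^ 2 * r ^ (n - 1)) := by
  have : NeZero n := ⟨hn⟩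
  have hae : fchDensity 1 η₁ η₂ W (fun x : EuclideanSpace ℝ (Fin n) => U ‖x‖)
      =ᵐ[volume] fun y => -(η₁ / 2 * deriv U ‖y‖ ^ 2 + η₂ * W (U ‖y‖)) := by
    filter_upwards [compl_mem_ae_iff.2 (measure_singleton (0 : EuclideanSpace ℝ (Fin n)))]
      with y hy
    rw [fchDensity, hP.lap_comp_norm_eq hn hV hW,
      gradSq_comp_norm hy (hP.hasDerivAt (norm_pos_iff.2 hy))]
    ring
  have hA := hP.intervalIntegrable_pow_mul_deriv_sq (n - 1)
  have hB := hP.intervalIntegrable_pow_mul_comp hW.continuous (n - 1)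
  rw [FCH_eq_integral_fchDensity, Measure.restrict_univ, integral_congr_ae hae,
    integral_fun_norm_addHaar volume fun r => -(η₁ / 2 * deriv U r ^ 2 + η₂ * W (U r)),
    finrank_euclideanSpace_fin,
    setIntegral_Ioi_eq_intervalIntegral_of_eq_zero hP.pos.le fun r hr => by
      simp [hP.eq_zero_of_le r hr.le, hP.deriv_eq_zero_of_le hr.le, hW0],
    setIntegral_Ioi_eq_intervalIntegral_of_eq_zero hP.pos.le fun r hr => by
      simp [hP.deriv_eq_zero_of_le hr.le]]
  simp only [smul_eq_mul, nsmul_eq_mul, mul_neg, mul_add, mul_left_comm _ (η₁ / 2),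
    mul_left_comm _ η₂, mul_comm (deriv U _ ^ 2)]
  rw [intervalIntegral.integral_neg, intervalIntegral.integral_add (hA.const_mul _)
    (hB.const_mul _), intervalIntegral.integral_const_mul, intervalIntegral.integral_const_mul,
    hP.pohozaev hn hW hW0, measureReal_def]
  have hn' : (n : ℝ) ≠ 0 := Nat.cast_ne_zero.2 hn
  field_simp

end IsMicelleProfile

theorem stmt_15_general (n : ℕ) (hn : 2 ≤ n) (η₁ η₂ : ℝ)
    (W : ℝ → ℝ) (hW : ContDiff ℝ 1 W) (hW0 : W 0 = 0) (hW'0 : deriv W 0 = 0)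
    (R₀ : ℝ) (hR₀ : 0 < R₀) (U : ℝ → ℝ)
    (hU : ContDiffOn ℝ 2 U (Set.Ici 0))
    (hUsupp : ∀ R : ℝ, R₀ ≤ R → U R = 0)
    (hODE : ∀ R : ℝ, 0 < R →
      deriv (deriv U) R + ((n - 1 : ℝ) / R) * deriv U R = deriv W (U R))
    (hUC2 : ContDiff ℝ 2 (fun x : EuclideanSpace ℝ (Fin n) => U ‖x‖))
    (ε : ℕ → ℝ) (hε : ∀ j, 0 < ε j)
    (N : ℕ → ℕ) (α : ℝ)
    (hNα : Tendsto (fun j => (N j : ℝ) * ε j ^ (n - 1)) atTop (nhds α))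
    (x : (j : ℕ) → Fin (N j) → EuclideanSpace ℝ (Fin n))
    (hsep : ∀ j, ∀ k k' : Fin (N j), k ≠ k' → 2 * ε j * R₀ < ‖x j k - x j k'‖) :
    Tendsto
      (fun j => FCH (ε j) η₁ η₂ W Set.univ
        (fun y => ∑ k : Fin (N j), U (‖y - x j k‖ / ε j)))
      atTop
      (nhds (-(α * n
        * (volume (Metric.ball (0 : EuclideanSpace ℝ (Fin n)) 1)).toReal
        * (η₁ / 2 + ((2 - n : ℝ) / (2 * n)) * η₂)
        * ∫ R in Set.Ioi (0 : ℝ), (deriv U R) ^ 2 * R ^ (n - 1)))) := by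
  have hn0 : n ≠ 0 := by omega
  have hP : IsMicelleProfile n W R₀ U := ⟨hR₀, hU, hUsupp, hODE⟩
  have hrescale : ∀ j (y : EuclideanSpace ℝ (Fin n)) k,
      U (‖y - x j k‖ / ε j) = U ‖(ε j)⁻¹ • (y - x j k)‖ := fun j y k => by
    rw [norm_smul, norm_inv, Real.norm_of_nonneg (hε j).le, inv_mul_eq_div]
  have hFCH : ∀ j, FCH (ε j) η₁ η₂ W univ (fun y => ∑ k : Fin (N j), U (‖y - x j k‖ / ε j))
      = N j * ε j ^ (n - 1) * FCH 1 η₁ η₂ W univ fun y => U ‖y‖ := fun j => by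
    simp only [hrescale]
    rw [FCH_sum_comp_rescale hn0 hUC2 (hP.lap_comp_norm_eq hn0 hUC2 hW)
      hP.support_comp_norm_subset (hε j) (fun k k' h => hsep j k k' h) hW hW0 hW'0,
      Fintype.card_fin]
  simp only [hFCH, hP.FCH_one_comp_norm hn0 hUC2 hW hW0]
  convert hNα.mul_const _ using 2
  ring

/-- the limiting FCH energy of a sequence of superpositions of disjointly
supported micelles is `−α·n·ω_n·(η₁/2 + ((2−n)/(2n))·η₂)·σ_n`. -/
theorem stmt_15 (n : ℕ) (hn : 2 ≤ n) (η₁ η₂ : ℝ)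
    (W : ℝ → ℝ) (hW : ContDiff ℝ 1 W) (hW0 : W 0 = 0) (hW'0 : deriv W 0 = 0)
    (R₀ : ℝ) (hR₀ : 0 < R₀) (U : ℝ → ℝ)
    (hU : ContDiffOn ℝ 2 U (Set.Ici 0))
    (hU'0 : derivWithin U (Set.Ici 0) 0 = 0)
    (hUsupp : ∀ R : ℝ, R₀ ≤ R → U R = 0)
    (hODE : ∀ R : ℝ, 0 < R →
      deriv (deriv U) R + ((n - 1 : ℝ) / R) * deriv U R = deriv W (U R))
    (hUC2 : ContDiff ℝ 2 (fun x : EuclideanSpace ℝ (Fin n) => U ‖x‖))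
    (ε : ℕ → ℝ) (hε : ∀ j, 0 < ε j) (hε0 : Tendsto ε atTop (nhds 0))
    (N : ℕ → ℕ) (α : ℝ) (hα : 0 ≤ α)
    (hNα : Tendsto (fun j => (N j : ℝ) * ε j ^ (n - 1)) atTop (nhds α))
    (x : (j : ℕ) → Fin (N j) → EuclideanSpace ℝ (Fin n))
    (hsep : ∀ j, ∀ k k' : Fin (N j), k ≠ k' → 2 * ε j * R₀ < ‖x j k - x j k'‖) :
    Tendsto
      (fun j => FCH (ε j) η₁ η₂ W Set.univ
        (fun y => ∑ k : Fin (N j), U (‖y - x j k‖ / ε j)))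
      atTop
      (nhds (-(α * n
        * (volume (Metric.ball (0 : EuclideanSpace ℝ (Fin n)) 1)).toReal
        * (η₁ / 2 + ((2 - n : ℝ) / (2 * n)) * η₂)
        * ∫ R in Set.Ioi (0 : ℝ), (deriv U R) ^ 2 * R ^ (n - 1)))) :=
  stmt_15_general n hn η₁ η₂ W hW hW0 hW'0 R₀ hR₀ U hU hUsupp hODE hUC2 ε hε N α hNα x hsep
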